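/- Let F_H be an affine and linear invariant family of normalized sense-preserving harmonic mappings on 𝔻. Suppose there exists f_0 = h_0 + conj(g_0) ∈ F_H^0 such that for every integer n ≥ 2 and every f = h + conj(g) ∈ F_H^0 one has Re(a_n(h)) ≤ a_n(h_0) and Re(b_n(g)) ≤ b_n(g_0) (all a_n(h_0), b_n(g_0) being nonnegative real numbers). Then the order of F_H equals α(F_H) = a_2(h_0) + b_2(g_0). -/

import Mathlib

open Complex Set

noncomputable section

/-- The open unit disk in the complex plane. -/
def unitDisk : Set ℂ := {z : ℂ | ‖z‖ < 1}

/-- The generalized Koebe function `k_a`, using the principal branch of the logarithm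
(via the complex power function). -/
def koebeFn (a : ℂ) (z : ℂ) : ℂ :=
  if a = 0 then (1 / 2) * Complex.log ((1 + z) / (1 - z))
  else (1 / (2 * a)) * (((1 + z) / (1 - z)) ^ a - 1)

/-- The lens map `l_R` (with principal-branch powers); note that this formula also
gives `l_0 ≡ 0` and `l_1 = id` on the unit disk. -/
def lensMap (R : ℝ) (z : ℂ) : ℂ :=
  (((1 + z) / (1 - z)) ^ (R : ℂ) - 1) / (((1 + z) / (1 - z)) ^ (R : ℂ) + 1)

/-- The `n`-th Taylor coefficient of `f` at `0`. -/
def coeffAt (f : ℂ → ℂ) (n : ℕ) : ℂ := iteratedDeriv n f 0 / n.factorial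

/-- A normalized sense-preserving harmonic mapping `f = h + conj g` on the unit disk,
recorded via its analytic part `h` and co-analytic part `g`. -/
structure IsNormalizedSPH (h g : ℂ → ℂ) : Prop where
  h_analytic : DifferentiableOn ℂ h unitDisk
  g_analytic : DifferentiableOn ℂ g unitDisk
  h_zero : h 0 = 0
  g_zero : g 0 = 0
  dh_zero : deriv h 0 = 1
  dh_ne : ∀ z ∈ unitDisk, deriv h z ≠ 0
  sense_preserving : ∀ z ∈ unitDisk, ‖deriv g z‖ < ‖deriv h z‖

/-- An affine and linear invariant family of normalized sense-preserving harmonic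
mappings `f = h + conj g` on the unit disk, each member recorded as the pair `(h, g)`:
the family is closed under Koebe transforms, affine changes and rotations
(each written out in terms of the canonical decomposition). -/
structure IsAffineLinearInvariantFamily (F : Set ((ℂ → ℂ) × (ℂ → ℂ))) : Prop where
  nsph : ∀ p ∈ F, IsNormalizedSPH p.1 p.2
  koebe_mem : ∀ p ∈ F, ∀ ζ ∈ unitDisk,
    ((fun z => (p.1 ((z + ζ) / (1 + (starRingEnd ℂ) ζ * z)) - p.1 ζ) /
        ((1 - ((‖ζ‖ : ℝ) : ℂ) ^ 2) * deriv p.1 ζ)),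
     (fun z => (p.2 ((z + ζ) / (1 + (starRingEnd ℂ) ζ * z)) - p.2 ζ) /
        ((1 - ((‖ζ‖ : ℝ) : ℂ) ^ 2) * (starRingEnd ℂ) (deriv p.1 ζ)))) ∈ F
  affine_mem : ∀ p ∈ F, ∀ ε ∈ unitDisk,
    ((fun z => (p.1 z - (starRingEnd ℂ) ε * p.2 z) / (1 - (starRingEnd ℂ) ε * deriv p.2 0)),
     (fun z => (p.2 z - ε * p.1 z) /
        (starRingEnd ℂ) (1 - (starRingEnd ℂ) ε * deriv p.2 0))) ∈ F
  rot_mem : ∀ p ∈ F, ∀ lam : ℂ, ‖lam‖ = 1 →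
    ((fun z => (starRingEnd ℂ) lam * p.1 (lam * z)),
     (fun z => lam * p.2 (lam * z))) ∈ F

/-!
Rotating a member `(h, g)` by `l` and then applying the affine change with `ε = l² g'(0)` gives
a member of `F_H⁰` whose second coefficients are `l u` and `l³ v`, where
`u = (a₂ - conj b₁ b₂) / (1 - |b₁|²)` and `v = (b₂ - b₁ a₂) / (1 - |b₁|²)`. Maximality of `f₀`
over all rotations `l` gives `|u| ≤ a₂(h₀)` and `|v| ≤ b₂(g₀)`, and `a₂ = u + conj b₁ v` with
`|b₁| < 1` bounds `|a₂(h)|` by `a₂(h₀) + b₂(g₀)`. Conversely, the affine changes of `f₀` with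
`ε = -t` have `a₂ = a₂(h₀) + t b₂(g₀)`, which tends to that bound as `t → 1`.
-/

open Filter Topology ComplexConjugate

lemma isOpen_unitDisk : IsOpen unitDisk :=
  isOpen_lt continuous_norm continuous_const

lemma zero_mem_unitDisk : (0 : ℂ) ∈ unitDisk := by simp [unitDisk]

lemma mapsTo_mul_unitDisk {l : ℂ} (hl : ‖l‖ ≤ 1) : MapsTo (l * ·) unitDisk unitDisk :=
  fun z (hz : ‖z‖ < 1) => show ‖l * z‖ < 1 by
    rw [norm_mul]
    exact (mul_le_of_le_one_left (norm_nonneg z) hl).trans_lt hz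

lemma coeffAt_one (f : ℂ → ℂ) : coeffAt f 1 = deriv f 0 := by simp [coeffAt]

lemma coeffAt_sub_const_mul_div {f g : ℂ → ℂ} {n : ℕ} (hf : ContDiffAt ℂ n f 0)
    (hg : ContDiffAt ℂ n g 0) (c d : ℂ) :
    coeffAt (fun z => (f z - c * g z) / d) n = (coeffAt f n - c * coeffAt g n) / d := by
  simp only [coeffAt, iteratedDeriv_div_const, iteratedDeriv_fun_sub hf (contDiffAt_const.mul hg),
    iteratedDeriv_const_mul_field]
  ring

lemma coeffAt_const_mul_comp_mul {f : ℂ → ℂ} {s : Set ℂ} {n : ℕ} (hs : IsOpen s) (h0 : 0 ∈ s)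
    (hf : ContDiffOn ℂ n f s) {l : ℂ} (hl : MapsTo (l * ·) s s) (a : ℂ) :
    coeffAt (fun z => a * f (l * z)) n = a * l ^ n * coeffAt f n := by
  have hcomp := iteratedDerivWithin_comp_const_smul h0 hs.uniqueDiffOn hf l hl
  rw [iteratedDerivWithin_of_isOpen hs h0, mul_zero, iteratedDerivWithin_of_isOpen hs h0,
    smul_eq_mul] at hcomp
  simp only [coeffAt, iteratedDeriv_const_mul_field, hcomp]
  ring

lemma norm_le_of_forall_re_pow_mul_le {z : ℂ} {B : ℝ} {n : ℕ} (hn : n ≠ 0)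
    (h : ∀ l : ℂ, ‖l‖ = 1 → (l ^ n * z).re ≤ B) : ‖z‖ ≤ B := by
  set l := exp (↑(-(arg z / n)) * I)
  have hlz : l ^ n * z = ‖z‖ := by
    conv_lhs => rw [← norm_mul_exp_arg_mul_I z, ← exp_nat_mul, mul_left_comm, ← exp_add]
    have hn' : (n : ℂ) ≠ 0 := Nat.cast_ne_zero.mpr hn
    have : (n : ℂ) * (↑(-(arg z / n)) * I) + arg z * I = 0 := by
      push_cast
      field_simp
      ring
    rw [this, exp_zero, mul_one]
  simpa [hlz] using h l (norm_exp_ofReal_mul_I _)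

namespace IsNormalizedSPH

variable {h g : ℂ → ℂ} (hf : IsNormalizedSPH h g)
include hf

lemma contDiffAt_h (n : ℕ) : ContDiffAt ℂ n h 0 :=
  (hf.h_analytic.contDiffOn isOpen_unitDisk).contDiffAt
    (isOpen_unitDisk.mem_nhds zero_mem_unitDisk)

lemma contDiffAt_g (n : ℕ) : ContDiffAt ℂ n g 0 :=
  (hf.g_analytic.contDiffOn isOpen_unitDisk).contDiffAt
    (isOpen_unitDisk.mem_nhds zero_mem_unitDisk)

lemma norm_deriv_g_zero_lt_one : ‖deriv g 0‖ < 1 := by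
  simpa [hf.dh_zero] using hf.sense_preserving 0 zero_mem_unitDisk

end IsNormalizedSPH

namespace IsAffineLinearInvariantFamily

variable {F : Set ((ℂ → ℂ) × (ℂ → ℂ))} (hF : IsAffineLinearInvariantFamily F)
include hF

lemma exists_mem_coeffAt_rotate {h g : ℂ → ℂ} (hp : (h, g) ∈ F) {l : ℂ} (hl : ‖l‖ = 1) :
    ∃ q ∈ F, ∀ n : ℕ, coeffAt q.1 n = conj l * l ^ n * coeffAt h n ∧
      coeffAt q.2 n = l * l ^ n * coeffAt g n := by
  have hf := hF.nsph _ hp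
  refine ⟨_, hF.rot_mem _ hp l hl, fun n => ⟨?_, ?_⟩⟩
  · exact coeffAt_const_mul_comp_mul isOpen_unitDisk zero_mem_unitDisk
      (hf.h_analytic.contDiffOn isOpen_unitDisk) (mapsTo_mul_unitDisk hl.le) _
  · exact coeffAt_const_mul_comp_mul isOpen_unitDisk zero_mem_unitDisk
      (hf.g_analytic.contDiffOn isOpen_unitDisk) (mapsTo_mul_unitDisk hl.le) _

lemma exists_mem_coeffAt_affine {h g : ℂ → ℂ} (hp : (h, g) ∈ F) {ε : ℂ} (hε : ε ∈ unitDisk) :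
    ∃ q ∈ F, ∀ n : ℕ,
      coeffAt q.1 n = (coeffAt h n - conj ε * coeffAt g n) / (1 - conj ε * deriv g 0) ∧
      coeffAt q.2 n = (coeffAt g n - ε * coeffAt h n) / conj (1 - conj ε * deriv g 0) := by
  have hf := hF.nsph _ hp
  exact ⟨_, hF.affine_mem _ hp ε hε, fun n =>
    ⟨coeffAt_sub_const_mul_div (hf.contDiffAt_h n) (hf.contDiffAt_g n) _ _,
      coeffAt_sub_const_mul_div (hf.contDiffAt_g n) (hf.contDiffAt_h n) _ _⟩⟩

lemma exists_mem_deriv_zero_coeffAt_two {h g : ℂ → ℂ} (hp : (h, g) ∈ F) {l : ℂ} (hl : ‖l‖ = 1) :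
    ∃ q ∈ F, deriv q.2 0 = 0 ∧
      coeffAt q.1 2 = l * ((coeffAt h 2 - conj (deriv g 0) * coeffAt g 2) /
        (1 - (‖deriv g 0‖ : ℂ) ^ 2)) ∧
      coeffAt q.2 2 = l ^ 3 * ((coeffAt g 2 - deriv g 0 * coeffAt h 2) /
        (1 - (‖deriv g 0‖ : ℂ) ^ 2)) := by
  set b₁ := deriv g 0
  have hconj : conj l * l = 1 := by rw [conj_mul', hl]; norm_num
  obtain ⟨q, hq, hqc⟩ := hF.exists_mem_coeffAt_rotate hp hl
  have hq₁ : deriv q.2 0 = l ^ 2 * b₁ := by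
    rw [← coeffAt_one, (hqc 1).2, coeffAt_one]; ring
  have hε : l ^ 2 * b₁ ∈ unitDisk := show ‖l ^ 2 * b₁‖ < 1 by
    simpa [hl] using (hF.nsph _ hp).norm_deriv_g_zero_lt_one
  obtain ⟨r, hr, hrc⟩ := hF.exists_mem_coeffAt_affine hq hε
  have hden : 1 - conj (l ^ 2 * b₁) * deriv q.2 0 = 1 - (‖b₁‖ : ℂ) ^ 2 := by
    rw [hq₁, ← conj_mul' b₁, map_mul, map_pow]
    linear_combination (-(conj l * l) - 1) * conj b₁ * b₁ * hconj
  have hden_conj : conj (1 - (‖b₁‖ : ℂ) ^ 2) = 1 - (‖b₁‖ : ℂ) ^ 2 := by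
    rw [← ofReal_pow, ← ofReal_one, ← ofReal_sub, conj_ofReal]
  refine ⟨r, hr, ?_, ?_, ?_⟩
  · rw [← coeffAt_one, (hrc 1).2, hden, hden_conj, (hqc 1).1, (hqc 1).2, coeffAt_one,
      coeffAt_one, (hF.nsph _ hp).dh_zero, div_eq_zero_iff]
    left
    linear_combination -(l ^ 2 * b₁) * hconj
  · rw [(hrc 2).1, hden, (hqc 2).1, (hqc 2).2, mul_div_assoc']
    congr 1
    rw [map_mul, map_pow]
    linear_combination (l * coeffAt h 2 - (conj l * l + 1) * l * conj b₁ * coeffAt g 2) * hconj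
  · rw [(hrc 2).2, hden, hden_conj, (hqc 2).1, (hqc 2).2, mul_div_assoc']
    congr 1
    linear_combination -(l ^ 3 * b₁ * coeffAt h 2) * hconj

lemma norm_coeffAt_two_le {A B : ℝ}
    (hbound : ∀ h g : ℂ → ℂ, (h, g) ∈ F → deriv g 0 = 0 →
      (coeffAt h 2).re ≤ A ∧ (coeffAt g 2).re ≤ B)
    {h g : ℂ → ℂ} (hp : (h, g) ∈ F) : ‖coeffAt h 2‖ ≤ A + B := by
  set b₁ := deriv g 0
  set D : ℂ := 1 - (‖b₁‖ : ℂ) ^ 2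
  set u := (coeffAt h 2 - conj b₁ * coeffAt g 2) / D
  set v := (coeffAt g 2 - b₁ * coeffAt h 2) / D
  have hb₁ : ‖b₁‖ < 1 := (hF.nsph _ hp).norm_deriv_g_zero_lt_one
  have hu : ‖u‖ ≤ A := norm_le_of_forall_re_pow_mul_le one_ne_zero fun l hl => by
    obtain ⟨q, hq, hq₀, hq₁, -⟩ := hF.exists_mem_deriv_zero_coeffAt_two hp hl
    simpa [hq₁] using (hbound q.1 q.2 hq hq₀).1
  have hv : ‖v‖ ≤ B := norm_le_of_forall_re_pow_mul_le three_ne_zero fun l hl => by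
    obtain ⟨q, hq, hq₀, -, hq₂⟩ := hF.exists_mem_deriv_zero_coeffAt_two hp hl
    simpa [hq₂] using (hbound q.1 q.2 hq hq₀).2
  have hD : D ≠ 0 := by
    rw [show D = ((1 - ‖b₁‖ ^ 2 : ℝ) : ℂ) by push_cast; rfl, ofReal_ne_zero]
    nlinarith [norm_nonneg b₁]
  have hdecomp : coeffAt h 2 = u + conj b₁ * v := by
    simp only [u, v, D] at hD ⊢
    rw [← conj_mul' b₁] at hD ⊢
    field_simp
    ring
  calc ‖coeffAt h 2‖ = ‖u + conj b₁ * v‖ := by rw [← hdecomp]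
    _ ≤ ‖u‖ + ‖b₁‖ * ‖v‖ := by simpa using norm_add_le u (conj b₁ * v)
    _ ≤ A + B := by nlinarith [norm_nonneg v]

lemma exists_mem_coeffAt_two_eq_add {h₀ g₀ : ℂ → ℂ} (hmem : (h₀, g₀) ∈ F)
    (hg₀ : deriv g₀ 0 = 0) {t : ℝ} (ht : |t| < 1) :
    ∃ q ∈ F, coeffAt q.1 2 = coeffAt h₀ 2 + t * coeffAt g₀ 2 := by
  have hε : -(t : ℂ) ∈ unitDisk := show ‖-(t : ℂ)‖ < 1 by simpa using ht
  obtain ⟨q, hq, hqc⟩ := hF.exists_mem_coeffAt_affine hmem hε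
  exact ⟨q, hq, by simp [(hqc 2).1, hg₀]⟩

end IsAffineLinearInvariantFamily

/-- If `f₀ = h₀ + conj g₀ ∈ F_H⁰` simultaneously maximizes `Re a_n(h)` and `Re b_n(g)` over
`F_H⁰` for every `n ≥ 2` (the maximal values being nonnegative real numbers), then the
order of the family, `α(F_H) = sup_{f = h + conj g ∈ F_H} |a_2(h)|`, equals
`a_2(h₀) + b_2(g₀)`. -/
theorem order_of_family_with_coefficient_maximizer
    (F : Set ((ℂ → ℂ) × (ℂ → ℂ))) (hF : IsAffineLinearInvariantFamily F)
    (h₀ g₀ : ℂ → ℂ) (hmem : (h₀, g₀) ∈ F) (hg₀0 : deriv g₀ 0 = 0)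
    (hmax : ∀ n : ℕ, 2 ≤ n →
      (coeffAt h₀ n).im = 0 ∧ 0 ≤ (coeffAt h₀ n).re ∧
      (coeffAt g₀ n).im = 0 ∧ 0 ≤ (coeffAt g₀ n).re ∧
      ∀ h g : ℂ → ℂ, (h, g) ∈ F → deriv g 0 = 0 →
        (coeffAt h n).re ≤ (coeffAt h₀ n).re ∧ (coeffAt g n).re ≤ (coeffAt g₀ n).re) :
    sSup {r : ℝ | ∃ p ∈ F, r = ‖coeffAt p.1 2‖}
      = (coeffAt h₀ 2).re + (coeffAt g₀ 2).re := by
  obtain ⟨-, -, -, -, hbound⟩ := hmax 2 le_rfl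
  refine IsLUB.csSup_eq ⟨?_, fun M hM => ?_⟩ ⟨_, _, hmem, rfl⟩
  · rintro r ⟨p, hp, rfl⟩
    exact hF.norm_coeffAt_two_le hbound hp
  · have hlower : ∀ t ∈ Ioo (-1 : ℝ) 1, (coeffAt h₀ 2).re + t * (coeffAt g₀ 2).re ≤ M := by
      intro t ht
      obtain ⟨q, hq, hqc⟩ := hF.exists_mem_coeffAt_two_eq_add hmem hg₀0 (abs_lt.mpr ht)
      calc (coeffAt h₀ 2).re + t * (coeffAt g₀ 2).re = (coeffAt q.1 2).re := by simp [hqc]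
        _ ≤ ‖coeffAt q.1 2‖ := re_le_norm _
        _ ≤ M := hM ⟨q, hq, rfl⟩
    have hlim : Tendsto (fun t : ℝ => (coeffAt h₀ 2).re + t * (coeffAt g₀ 2).re) (𝓝[<] 1)
        (𝓝 ((coeffAt h₀ 2).re + 1 * (coeffAt g₀ 2).re)) :=
      (Continuous.tendsto (by fun_prop) 1).mono_left nhdsWithin_le_nhds
    simpa using le_of_tendsto hlim (eventually_of_mem (Ioo_mem_nhdsLT (by norm_num)) hlower)
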